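/- arXiv:1503.02379 — 4 statements merged into one kernel-verified Lean document; each statement's English description precedes it below -/
import Mathlib

section
/- Let g : ℝ → ℂ be integrable and band-limited to f_g > 0, i.e., 𝓕g(ξ) = 0 for all ξ with |ξ| ≥ f_g. Let f > 0 and f_c > 0 satisfy f_c ≤ 2f − f_g. Then the Fourier transform of the double-carrier-frequency term t ↦ g(t)·cos(4πft) vanishes at every frequency ξ with |ξ| < f_c; consequently this term is completely removed by an ideal low-pass filter with cut-off frequency f_c. -/
/-!
Writing `cos (2π b t) = (e^{2πibt} + e^{-2πibt}) / 2`, multiplication by the cosine splits the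
spectrum into two copies shifted by `±b`: `𝓕 (g · cos (2π b ·)) ξ = (𝓕 g (ξ - b) + 𝓕 g (ξ + b)) / 2`.
With `b = 2f` and `|ξ| < f_c ≤ 2f - f_g`, both `ξ ∓ 2f` lie outside the band of `g`.
-/

open Real MeasureTheory

open scoped FourierTransform

section Modulation

variable {E : Type*} [NormedAddCommGroup E] [NormedSpace ℂ E]

theorem Real.fourier_const_smul (c : ℂ) (u : ℝ → E) : 𝓕 (c • u) = c • 𝓕 u :=
  VectorFourier.fourierIntegral_const_smul _ _ _ u c

theorem Real.fourier_add {u v : ℝ → E} (hu : Integrable u) (hv : Integrable v) :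
    𝓕 (u + v) = 𝓕 u + 𝓕 v :=
  VectorFourier.fourierIntegral_add Real.continuous_fourierChar continuous_inner hu hv

theorem MeasureTheory.Integrable.fourierChar_smul {g : ℝ → E} (hg : Integrable g) (a : ℝ) :
    Integrable (fun t => 𝐞 (a * t) • g t) := by
  refine hg.norm.mono' ?_ (.of_forall fun t => (Circle.norm_smul _ _).le)
  exact ((Real.continuous_fourierChar.comp (continuous_const_mul a)).aestronglyMeasurable).smul
    hg.aestronglyMeasurable

theorem Real.fourier_fourierChar_smul (g : ℝ → E) (a ξ : ℝ) :
    𝓕 (fun t => 𝐞 (a * t) • g t) ξ = 𝓕 g (ξ - a) := by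
  simp only [Real.fourier_real_eq, smul_smul, ← AddChar.map_add_eq_mul]
  congr! 4
  ring

theorem Real.cos_two_pi_mul_eq_fourierChar (x : ℝ) :
    (Real.cos (2 * π * x) : ℂ) = ((𝐞 x : ℂ) + 𝐞 (-x)) / 2 := by
  rw [Real.fourierChar_apply, Real.fourierChar_apply, Complex.ofReal_cos, Complex.cos]
  push_cast
  ring_nf

theorem Real.fourier_cos_smul {g : ℝ → E} (hg : Integrable g) (b ξ : ℝ) :
    𝓕 (fun t => (Real.cos (2 * π * b * t) : ℂ) • g t) ξ
      = (2 : ℂ)⁻¹ • (𝓕 g (ξ - b) + 𝓕 g (ξ + b)) := by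
  have hsplit : (fun t => (Real.cos (2 * π * b * t) : ℂ) • g t)
      = (2 : ℂ)⁻¹ • ((fun t => 𝐞 (b * t) • g t) + fun t => 𝐞 (-b * t) • g t) := by
    ext t
    rw [Pi.smul_apply, Pi.add_apply, mul_assoc, Real.cos_two_pi_mul_eq_fourierChar,
      Circle.smul_def, Circle.smul_def, ← add_smul, smul_smul, neg_mul, div_eq_inv_mul]
  rw [hsplit, Real.fourier_const_smul, Pi.smul_apply,
    Real.fourier_add (hg.fourierChar_smul b) (hg.fourierChar_smul (-b)), Pi.add_apply,
    Real.fourier_fourierChar_smul, Real.fourier_fourierChar_smul, sub_neg_eq_add]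

end Modulation

theorem fourier_cos_double_carrier_vanishes_general
    (g : ℝ → ℂ) (hg : Integrable g)
    (f_g f f_c : ℝ)
    (hband : ∀ ξ : ℝ, f_g ≤ |ξ| → FourierTransform.fourier g ξ = 0)
    (hcut : f_c ≤ 2 * f - f_g) :
    ∀ ξ : ℝ, |ξ| < f_c →
      FourierTransform.fourier (fun t => g t * (Real.cos (4 * π * f * t) : ℂ)) ξ = 0 := by
  intro ξ hξ
  have hcos : (fun t => g t * (Real.cos (4 * π * f * t) : ℂ))
      = fun t => (Real.cos (2 * π * (2 * f) * t) : ℂ) • g t := by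
    ext t
    rw [smul_eq_mul, mul_comm]
    ring_nf
  have hlow : f_g ≤ |ξ - 2 * f| := by
    linarith [le_abs_self ξ, neg_le_abs (ξ - 2 * f)]
  have hhigh : f_g ≤ |ξ + 2 * f| := by
    linarith [neg_abs_le ξ, le_abs_self (ξ + 2 * f)]
  rw [hcos, Real.fourier_cos_smul hg, hband _ hlow, hband _ hhigh, add_zero, smul_zero]

/-- If `g` is integrable and band-limited to `f_g`, and `f_c ≤ 2f − f_g`, then the
Fourier transform of `t ↦ g(t)·cos(4πft)` vanishes on `(−f_c, f_c)`, so an ideal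
low-pass filter with cut-off `f_c` removes this double-carrier-frequency term. -/
theorem fourier_cos_double_carrier_vanishes
    (g : ℝ → ℂ) (hg : Integrable g)
    (f_g f f_c : ℝ) (hfg : 0 < f_g)
    (hband : ∀ ξ : ℝ, f_g ≤ |ξ| → FourierTransform.fourier g ξ = 0)
    (hf : 0 < f) (hfc : 0 < f_c) (hcut : f_c ≤ 2 * f - f_g) :
    ∀ ξ : ℝ, |ξ| < f_c →
      FourierTransform.fourier (fun t => g t * (Real.cos (4 * π * f * t) : ℂ)) ξ = 0 :=
  fourier_cos_double_carrier_vanishes_general g hg f_g f f_c hband hcut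
end

section
/- Let g : ℝ → ℂ be integrable and band-limited to f_g > 0, i.e., 𝓕g(ξ) = 0 for all ξ with |ξ| ≥ f_g. Let f > 0 and f_c > 0 satisfy f_c ≤ 2f − f_g. Then the Fourier transform of the double-carrier-frequency term t ↦ g(t)·sin(4πft) vanishes at every frequency ξ with |ξ| < f_c; consequently this term is completely removed by an ideal low-pass filter with cut-off frequency f_c. -/
/-!
Writing `sin (2π·2f·t) = (𝐞 (2f·t) - 𝐞 (-2f·t)) / 2i`, the modulation rule shows that the
spectrum of `t ↦ g t · sin (4πft)` is `𝓕 g` shifted by `±2f`, and so it is supported in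
`|ξ| ≥ 2f - f_g ≥ f_c`.
-/

open Real MeasureTheory Complex FourierTransform

namespace Real

variable {E : Type*} [NormedAddCommGroup E] [NormedSpace ℂ E]

theorem fourier_fourierChar_smul_s4 (g : ℝ → E) (a ξ : ℝ) :
    𝓕 (fun t : ℝ => 𝐞 (a * t) • g t) ξ = 𝓕 g (ξ - a) := by
  simp only [fourier_real_eq, smul_smul, ← AddChar.map_add_eq_mul]
  congr 1 with t
  ring_nf

theorem integrable_fourierChar_smul {g : ℝ → E} (hg : Integrable g) (a : ℝ) :
    Integrable fun t : ℝ => 𝐞 (a * t) • g t := by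
  simpa [mul_comm] using (fourierIntegral_convergent_iff (-a)).2 hg

theorem fourier_sub {g h : ℝ → E} (hg : Integrable g) (hh : Integrable h) (ξ : ℝ) :
    𝓕 (g - h) ξ = 𝓕 g ξ - 𝓕 h ξ := by
  simp only [fourier_eq, Pi.sub_apply, smul_sub]
  exact integral_sub ((fourierIntegral_convergent_iff ξ).2 hg)
    ((fourierIntegral_convergent_iff ξ).2 hh)

theorem fourier_const_smul_s4 (c : ℂ) (g : ℝ → E) (ξ : ℝ) : 𝓕 (c • g) ξ = c • 𝓕 g ξ :=
  congrFun (VectorFourier.fourierIntegral_const_smul _ _ _ g c) ξ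

theorem ofReal_sin_two_pi_mul_eq_fourierChar_sub (x : ℝ) :
    (Real.sin (2 * π * x) : ℂ) = (2 * I)⁻¹ * (𝐞 x - 𝐞 (-x)) := by
  simp only [fourierChar_apply, ofReal_sin, Complex.sin]
  push_cast
  field_simp
  ring_nf
  rw [I_sq]
  ring

theorem fourier_sin_smul {g : ℝ → E} (hg : Integrable g) (a ξ : ℝ) :
    𝓕 (fun t : ℝ => (Real.sin (2 * π * a * t) : ℂ) • g t) ξ
      = (2 * I)⁻¹ • (𝓕 g (ξ - a) - 𝓕 g (ξ + a)) := by
  have hsplit : (fun t : ℝ => (Real.sin (2 * π * a * t) : ℂ) • g t)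
      = (2 * I)⁻¹ • ((fun t : ℝ => 𝐞 (a * t) • g t) - fun t : ℝ => 𝐞 (-a * t) • g t) := by
    ext t
    rw [show 2 * π * a * t = 2 * π * (a * t) by ring, ofReal_sin_two_pi_mul_eq_fourierChar_sub,
      mul_smul, sub_smul]
    simp only [Pi.smul_apply, Pi.sub_apply, Circle.smul_def, neg_mul]
  rw [hsplit, fourier_const_smul_s4, fourier_sub (integrable_fourierChar_smul hg a)
    (integrable_fourierChar_smul hg (-a)), fourier_fourierChar_smul_s4, fourier_fourierChar_smul_s4,
    sub_neg_eq_add]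

end Real

theorem fourier_sin_double_carrier_vanishes_general
    (g : ℝ → ℂ) (hg : Integrable g)
    (f_g f f_c : ℝ)
    (hband : ∀ ξ : ℝ, f_g ≤ |ξ| → FourierTransform.fourier g ξ = 0)
    (hcut : f_c ≤ 2 * f - f_g) :
    ∀ ξ : ℝ, |ξ| < f_c →
      FourierTransform.fourier (fun t => g t * (Real.sin (4 * π * f * t) : ℂ)) ξ = 0 := by
  intro ξ hξ
  obtain ⟨hξ_lower, hξ_upper⟩ := abs_lt.1 hξ
  have hlower : 𝓕 g (ξ - 2 * f) = 0 := hband _ (le_abs.2 (Or.inr (by linarith)))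
  have hupper : 𝓕 g (ξ + 2 * f) = 0 := hband _ (le_abs.2 (Or.inl (by linarith)))
  have hcarrier : (fun t => g t * (Real.sin (4 * π * f * t) : ℂ))
      = fun t : ℝ => (Real.sin (2 * π * (2 * f) * t) : ℂ) • g t := by
    ext t
    rw [smul_eq_mul, mul_comm]
    ring_nf
  rw [hcarrier, Real.fourier_sin_smul hg, hlower, hupper, sub_self, smul_zero]

/-- If `g` is integrable and band-limited to `f_g`, and `f_c ≤ 2f − f_g`, then the
Fourier transform of `t ↦ g(t)·sin(4πft)` vanishes on `(−f_c, f_c)`, so an ideal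
low-pass filter with cut-off `f_c` removes this double-carrier-frequency term. -/
theorem fourier_sin_double_carrier_vanishes
    (g : ℝ → ℂ) (hg : Integrable g)
    (f_g f f_c : ℝ) (hfg : 0 < f_g)
    (hband : ∀ ξ : ℝ, f_g ≤ |ξ| → FourierTransform.fourier g ξ = 0)
    (hf : 0 < f) (hfc : 0 < f_c) (hcut : f_c ≤ 2 * f - f_g) :
    ∀ ξ : ℝ, |ξ| < f_c →
      FourierTransform.fourier (fun t => g t * (Real.sin (4 * π * f * t) : ℂ)) ξ = 0 :=
  fourier_sin_double_carrier_vanishes_general g hg f_g f f_c hband hcut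
end

section
/- Let g : ℝ → ℂ be integrable and band-limited to f_g > 0 (𝓕g(ξ) = 0 for |ξ| ≥ f_g), let f > 0, and let f_c satisfy f_g ≤ f_c ≤ 2f − f_g. Fix real a, b, L. Then for every frequency ξ with |ξ| < f_c, the Fourier transform of the mixed signal t ↦ −2·sin(2πft)·(a·g(t−L)·cos(2πf(t−L)) − b·g(t−L)·sin(2πf(t−L))) at ξ equals (−a·sin(2πfL) + b·cos(2πfL))·e^{−2πiξL}·𝓕g(ξ). In other words, after ideal low-pass filtering with cut-off f_c, the quadrature demodulation branch recovers exactly the delayed baseband pulse (−a·sin(2πfL) + b·cos(2πfL))·g(t−L). -/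
/-!
Mixing with `-2 sin(2πft)` splits the passband signal, by the product-to-sum formulas, into the
baseband pulse `(-a sin(2πfL) + b cos(2πfL)) g(t - L)` plus two copies of `g(t - L)` modulated by
`e^{±2πi(2f)t}`. Modulation shifts the spectrum by `±2f`, so on `|ξ| < f_c ≤ 2f - f_g` these copies
are evaluated where `𝓕 g` vanishes; the delay `L` contributes the phase `e^{-2πiξL}`.
-/

open Real MeasureTheory Complex FourierTransform

section Fourier

variable {E : Type*} [NormedAddCommGroup E] [NormedSpace ℂ E]

theorem fourier_comp_sub_right (k : ℝ → E) (L ξ : ℝ) :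
    𝓕 (fun t ↦ k (t - L)) ξ = Complex.exp (-2 * π * I * ξ * L) • 𝓕 k ξ := by
  have := congrFun (VectorFourier.fourierIntegral_comp_add_right 𝐞 volume (innerₗ ℝ) k (-L)) ξ
  simp only [Function.comp_def, ← sub_eq_add_neg] at this
  rw [show 𝓕 (fun t ↦ k (t - L)) ξ = _ from this, Circle.smul_def, Real.fourierChar_apply]
  congr 2
  simp only [innerₗ_apply_apply, RCLike.inner_apply, conj_trivial]
  push_cast
  ring

theorem fourier_exp_mul_I_smul (k : ℝ → E) (c ξ : ℝ) :
    𝓕 (fun t ↦ Complex.exp (↑(2 * π * c * t) * I) • k t) ξ = 𝓕 k (ξ - c) := by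
  simp_rw [Real.fourier_real_eq_integral_exp_smul, smul_smul, ← Complex.exp_add]
  congr 1 with t
  congr 3
  push_cast
  ring

theorem fourier_add_apply {u v : ℝ → E} (hu : Integrable u) (hv : Integrable v) (ξ : ℝ) :
    𝓕 (u + v) ξ = 𝓕 u ξ + 𝓕 v ξ :=
  congrFun (VectorFourier.fourierIntegral_add continuous_fourierChar continuous_inner hu hv) ξ

theorem fourier_const_smul_apply (r : ℂ) (u : ℝ → E) (ξ : ℝ) :
    𝓕 (r • u) ξ = r • 𝓕 u ξ :=
  congrFun (VectorFourier.fourierIntegral_const_smul 𝐞 volume (innerₗ ℝ) u r) ξ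

theorem MeasureTheory.Integrable.exp_mul_I_smul {k : ℝ → E} (hk : Integrable k) {φ : ℝ → ℝ}
    (hφ : Continuous φ) : Integrable (fun t ↦ Complex.exp (φ t * I) • k t) :=
  hk.bdd_smul 1
    (show Continuous fun t ↦ Complex.exp (φ t * I) by fun_prop).aestronglyMeasurable
    (.of_forall fun t ↦ (Complex.norm_exp_ofReal_mul_I _).le)

theorem fourier_const_add_exp_add_exp_smul {k : ℝ → E} (hk : Integrable k) (C A B : ℂ)
    (c ξ : ℝ) :
    𝓕 (fun t ↦ (C + A * Complex.exp (↑(2 * π * c * t) * I)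
        + B * Complex.exp (-↑(2 * π * c * t) * I)) • k t) ξ =
      C • 𝓕 k ξ + A • 𝓕 k (ξ - c) + B • 𝓕 k (ξ + c) := by
  set up : ℝ → E := fun t ↦ Complex.exp (↑(2 * π * c * t) * I) • k t
  set down : ℝ → E := fun t ↦ Complex.exp (↑(2 * π * (-c) * t) * I) • k t
  have hup : Integrable up := hk.exp_mul_I_smul (by fun_prop)
  have hdown : Integrable down := hk.exp_mul_I_smul (by fun_prop)
  have hsplit : (fun t ↦ (C + A * Complex.exp (↑(2 * π * c * t) * I)
      + B * Complex.exp (-↑(2 * π * c * t) * I)) • k t) = C • k + A • up + B • down := by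
    ext t
    simp only [Pi.add_apply, Pi.smul_apply, up, down, add_smul, mul_smul]
    congr 4
    push_cast
    ring
  rw [hsplit, fourier_add_apply ((hk.smul C).add (hup.smul A)) (hdown.smul B),
    fourier_add_apply (hk.smul C) (hup.smul A), fourier_const_smul_apply,
    fourier_const_smul_apply, fourier_const_smul_apply, fourier_exp_mul_I_smul,
    fourier_exp_mul_I_smul, sub_neg_eq_add]

end Fourier

theorem neg_two_sin_mul_quadrature_eq (x y a b : ℝ) :
    (-2 * Real.sin x * (a * Real.cos (x - y) - b * Real.sin (x - y)) : ℂ) =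
      ((-a * Real.sin y + b * Real.cos y : ℝ) : ℂ)
        + (a * I - b) / 2 * Complex.exp (-y * I) * Complex.exp (↑(2 * x) * I)
        + -(a * I + b) / 2 * Complex.exp (y * I) * Complex.exp (-↑(2 * x) * I) := by
  push_cast
  simp only [Complex.sin, Complex.cos, sub_mul, neg_mul, Complex.exp_sub, Complex.exp_neg,
    mul_assoc]
  rw [show (2 : ℂ) * (x * I) = x * I + x * I by ring, Complex.exp_add]
  field_simp
  ring_nf
  simp only [I_sq]
  ring

theorem quadrature_demodulation_recovers_baseband_general
    (g : ℝ → ℂ) (hg : Integrable g)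
    (f_g f f_c : ℝ)
    (hband : ∀ ξ : ℝ, f_g ≤ |ξ| → FourierTransform.fourier g ξ = 0)
    (hfc_hi : f_c ≤ 2 * f - f_g)
    (a b L : ℝ) :
    ∀ ξ : ℝ, |ξ| < f_c →
      FourierTransform.fourier
        (fun t => -2 * (Real.sin (2 * π * f * t) : ℂ) *
          ((a : ℂ) * g (t - L) * (Real.cos (2 * π * f * (t - L)) : ℂ)
            - (b : ℂ) * g (t - L) * (Real.sin (2 * π * f * (t - L)) : ℂ))) ξ =
      ((-a * Real.sin (2 * π * f * L) + b * Real.cos (2 * π * f * L) : ℝ) : ℂ)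
        * Complex.exp (-2 * π * Complex.I * (ξ : ℂ) * (L : ℂ))
        * FourierTransform.fourier g ξ := by
  intro ξ hξ
  have hdelay (η : ℝ) : 𝓕 (fun t ↦ g (t - L)) η =
      Complex.exp (-2 * π * I * η * L) * 𝓕 g η := fourier_comp_sub_right g L η
  have hdelay_band (η : ℝ) (hη : f_g ≤ |η|) : 𝓕 (fun t ↦ g (t - L)) η = 0 := by
    rw [hdelay, hband η hη, mul_zero]
  have hmixed : (fun t ↦ -2 * (Real.sin (2 * π * f * t) : ℂ) *
      ((a : ℂ) * g (t - L) * (Real.cos (2 * π * f * (t - L)) : ℂ)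
        - (b : ℂ) * g (t - L) * (Real.sin (2 * π * f * (t - L)) : ℂ))) =
      fun t ↦ (((-a * Real.sin (2 * π * f * L) + b * Real.cos (2 * π * f * L) : ℝ) : ℂ)
        + (a * I - b) / 2 * Complex.exp (-↑(2 * π * f * L) * I)
          * Complex.exp (↑(2 * π * (2 * f) * t) * I)
        + -(a * I + b) / 2 * Complex.exp (↑(2 * π * f * L) * I)
          * Complex.exp (-↑(2 * π * (2 * f) * t) * I)) • g (t - L) := by
    ext t
    rw [show 2 * π * (2 * f) * t = 2 * (2 * π * f * t) by ring,
      show 2 * π * f * (t - L) = 2 * π * f * t - 2 * π * f * L by ring, smul_eq_mul,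
      ← neg_two_sin_mul_quadrature_eq]
    ring
  rw [hmixed, fourier_const_add_exp_add_exp_smul (hg.comp_sub_right L),
    hdelay_band (ξ - 2 * f) (le_abs.mpr (.inr (by linarith [le_abs_self ξ]))),
    hdelay_band (ξ + 2 * f) (le_abs.mpr (.inl (by linarith [neg_abs_le ξ]))), hdelay]
  simp only [smul_eq_mul, mul_zero, add_zero]
  ring

/-- Quadrature demodulation branch: for `g` integrable and band-limited to `f_g`,
with `f_g ≤ f_c ≤ 2f − f_g`, the Fourier transform of the mixed signal
`t ↦ −2·sin(2πft)·(a·g(t−L)·cos(2πf(t−L)) − b·g(t−L)·sin(2πf(t−L)))` at any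
frequency `|ξ| < f_c` equals `(−a·sin(2πfL) + b·cos(2πfL))·e^{−2πiξL}·𝓕g(ξ)`;
i.e. after ideal low-pass filtering with cut-off `f_c` the branch recovers the
delayed baseband pulse `(−a·sin(2πfL) + b·cos(2πfL))·g(t−L)`. -/
theorem quadrature_demodulation_recovers_baseband
    (g : ℝ → ℂ) (hg : Integrable g)
    (f_g f f_c : ℝ) (hfg : 0 < f_g)
    (hband : ∀ ξ : ℝ, f_g ≤ |ξ| → FourierTransform.fourier g ξ = 0)
    (hf : 0 < f) (hfc_lo : f_g ≤ f_c) (hfc_hi : f_c ≤ 2 * f - f_g)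
    (a b L : ℝ) :
    ∀ ξ : ℝ, |ξ| < f_c →
      FourierTransform.fourier
        (fun t => -2 * (Real.sin (2 * π * f * t) : ℂ) *
          ((a : ℂ) * g (t - L) * (Real.cos (2 * π * f * (t - L)) : ℂ)
            - (b : ℂ) * g (t - L) * (Real.sin (2 * π * f * (t - L)) : ℂ))) ξ =
      ((-a * Real.sin (2 * π * f * L) + b * Real.cos (2 * π * f * L) : ℝ) : ℂ)
        * Complex.exp (-2 * π * Complex.I * (ξ : ℂ) * (L : ℂ))
        * FourierTransform.fourier g ξ :=
  quadrature_demodulation_recovers_baseband_general g hg f_g f f_c hband hfc_hi a b L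
end

section
/- Let f be real, r > 0, a₁, a₂ real with α = a₁a₂r, and for i = 1,…,M let r_i ≥ 0, L_i real, α_i = a₁a₂r_i. Let ε > 0 and set w₂ := Σ_{i=1}^{M} r_i/r + ε. Define Δ(ω) := w₂⁻¹ · Σ_{i=1}^{M} (r_i/r)·e^{−i(L_i−L)ω}·A(2πf(L_i−L)). Then (1) for every real ω, the perturbed coupling-path frequency response factors multiplicatively: α·e^{−iLω}·A(2πfL) + Σ_{i=1}^{M} α_i·e^{−iL_iω}·A(2πfL_i) = α·e^{−iLω}·A(2πfL) * ( I + w₂·Δ(ω) ); and (2) for every real ω, the maximum singular value (ℓ²→ℓ² operator norm) of Δ(ω) is at most (Σ_{i=1}^{M} r_i/r)/(Σ_{i=1}^{M} r_i/r + ε), which is strictly less than 1. Hence the perturbed path lies in the multiplicative uncertainty set { α·e^{−iLω}·A(2πfL)·(I + Δ(ω)·W₂) : sup_ω σ̄(Δ(ω)) < 1 } with weighting W₂ = w₂·I. -/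
open Real Matrix Finset

/-- The 2×2 clockwise rotation matrix `A(φ)`, regarded as a complex matrix. -/
noncomputable def rotAC (φ : ℝ) : Matrix (Fin 2) (Fin 2) ℂ :=
  !![(Real.cos φ : ℂ), (Real.sin φ : ℂ); (-(Real.sin φ) : ℂ), (Real.cos φ : ℂ)]

/-!
Every path `ℓ` has the unit-norm frequency response `P(ℓ) = e^{−iℓω}·A(2πfℓ)`, and
`P(L)·P(Lᵢ − L) = P(Lᵢ)` because both the phasor and the rotation are additive in `ℓ`.
Hence factoring `α·P(L)` out of the perturbed response leaves `I + Σᵢ (rᵢ/r)·P(Lᵢ − L)`,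
and the triangle inequality bounds the norm of that sum by `Σᵢ rᵢ/r`, which the weight
`w₂ = Σᵢ rᵢ/r + ε` strictly exceeds.
-/

lemma rotAC_mul_rotAC (a b : ℝ) : rotAC a * rotAC b = rotAC (a + b) := by
  simp only [rotAC, Matrix.mul_fin_two]
  push_cast [Real.cos_add, Real.sin_add]
  congr 1; ring_nf

lemma rotAC_zero : rotAC 0 = 1 := by
  ext i j; fin_cases i <;> fin_cases j <;> simp [rotAC]

lemma star_rotAC (a : ℝ) : star (rotAC a) = rotAC (-a) := by
  ext i j
  fin_cases i <;> fin_cases j <;>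
    simp [rotAC, Complex.conj_ofReal, -Complex.ofReal_cos, -Complex.ofReal_sin]

lemma rotAC_mem_unitary (a : ℝ) : rotAC a ∈ unitary (Matrix (Fin 2) (Fin 2) ℂ) := by
  constructor <;> rw [star_rotAC, rotAC_mul_rotAC] <;> simp [rotAC_zero]

open scoped Matrix.Norms.L2Operator

lemma norm_rotAC (a : ℝ) : ‖rotAC a‖ = 1 :=
  CStarRing.norm_of_mem_unitary (rotAC_mem_unitary a)

noncomputable def pathResponse (f ω ℓ : ℝ) : Matrix (Fin 2) (Fin 2) ℂ :=
  Complex.exp (-((ℓ * ω : ℝ) : ℂ) * Complex.I) • rotAC (2 * π * f * ℓ)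

section pathResponse

variable (f ω : ℝ)

lemma pathResponse_mul_pathResponse (a b : ℝ) :
    pathResponse f ω a * pathResponse f ω b = pathResponse f ω (a + b) := by
  simp only [pathResponse, smul_mul_smul_comm, rotAC_mul_rotAC, ← Complex.exp_add]
  congr 2 <;> push_cast <;> ring

lemma norm_pathResponse (ℓ : ℝ) : ‖pathResponse f ω ℓ‖ = 1 := by
  rw [pathResponse, norm_smul, norm_rotAC, mul_one, ← Complex.ofReal_neg]
  exact Complex.norm_exp_ofReal_mul_I _

lemma norm_sum_smul_pathResponse_le {ι : Type*} (s : Finset ι) (c : ι → ℂ) (ℓ : ι → ℝ) :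
    ‖∑ i ∈ s, c i • pathResponse f ω (ℓ i)‖ ≤ ∑ i ∈ s, ‖c i‖ :=
  (norm_sum_le _ _).trans_eq <| sum_congr rfl fun i _ => by
    rw [norm_smul, norm_pathResponse, mul_one]

end pathResponse

/-- The unknown multipath lies in the multiplicative uncertainty set with scalar
weight `w₂ = Σᵢ rᵢ/r + ε`: with
`Δ(ω) = w₂⁻¹ · Σᵢ (rᵢ/r)·e^{−i(Lᵢ−L)ω}·A(2πf(Lᵢ−L))`,
(1) the perturbed coupling-path frequency response factors as
`α·e^{−iLω}·A(2πfL) + Σᵢ αᵢ·e^{−iLᵢω}·A(2πfLᵢ)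
  = α·e^{−iLω}·A(2πfL) * (I + w₂·Δ(ω))`, and
(2) `σ̄(Δ(ω)) ≤ (Σᵢ rᵢ/r)/(Σᵢ rᵢ/r + ε) < 1` for every `ω`. -/
theorem multiplicative_uncertainty_model
    (f L r a₁ a₂ α : ℝ) (hr : 0 < r) (hα : α = a₁ * a₂ * r)
    (M : ℕ) (ri Li : Fin M → ℝ) (hri : ∀ i, 0 ≤ ri i)
    (αi : Fin M → ℝ) (hαi : ∀ i, αi i = a₁ * a₂ * ri i)
    (ε : ℝ) (hε : 0 < ε)
    (w₂ : ℝ) (hw₂ : w₂ = (∑ i : Fin M, ri i / r) + ε)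
    (Δ : ℝ → Matrix (Fin 2) (Fin 2) ℂ)
    (hΔ : ∀ ω : ℝ, Δ ω =
      ((w₂⁻¹ : ℝ) : ℂ) •
        ∑ i : Fin M,
          ((ri i / r : ℝ) : ℂ) • Complex.exp (-(((Li i - L) * ω : ℝ) : ℂ) * Complex.I) •
            rotAC (2 * π * f * (Li i - L))) :
    (∀ ω : ℝ,
      (α : ℂ) • Complex.exp (-((L * ω : ℝ) : ℂ) * Complex.I) • rotAC (2 * π * f * L)
        + ∑ i : Fin M,
            (αi i : ℂ) • Complex.exp (-((Li i * ω : ℝ) : ℂ) * Complex.I) • rotAC (2 * π * f * Li i)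
      = ((α : ℂ) • Complex.exp (-((L * ω : ℝ) : ℂ) * Complex.I) • rotAC (2 * π * f * L)) *
          (1 + ((w₂ : ℝ) : ℂ) • Δ ω)) ∧
    (∀ ω : ℝ,
      ‖Matrix.toEuclideanCLM (𝕜 := ℂ) (Δ ω)‖
        ≤ (∑ i : Fin M, ri i / r) / ((∑ i : Fin M, ri i / r) + ε)) ∧
    (∑ i : Fin M, ri i / r) / ((∑ i : Fin M, ri i / r) + ε) < 1 := by
  simp only [← pathResponse.eq_1] at hΔ ⊢
  have hS : 0 ≤ ∑ i : Fin M, ri i / r := sum_nonneg fun i _ => div_nonneg (hri i) hr.le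
  have hw₂pos : 0 < w₂ := hw₂ ▸ by positivity
  refine ⟨fun ω => ?_, fun ω => ?_, (div_lt_one (by positivity)).2 (lt_add_of_pos_right _ hε)⟩
  · have hwΔ : ((w₂ : ℝ) : ℂ) • Δ ω =
        ∑ i, ((ri i / r : ℝ) : ℂ) • pathResponse f ω (Li i - L) := by
      rw [hΔ, Complex.ofReal_inv, smul_inv_smul₀ (by exact_mod_cast hw₂pos.ne')]
    rw [mul_add, mul_one, hwΔ, mul_sum]
    refine congrArg _ (sum_congr rfl fun i _ => ?_)
    rw [smul_mul_smul_comm, pathResponse_mul_pathResponse, add_sub_cancel, ← Complex.ofReal_mul,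
      hα, hαi, mul_assoc (a₁ * a₂), mul_div_cancel₀ _ hr.ne']
  · rw [← Matrix.cstar_norm_def, hΔ, norm_smul, Complex.norm_real, norm_inv,
      Real.norm_of_nonneg hw₂pos.le, inv_mul_le_iff₀ hw₂pos, hw₂, mul_div_cancel₀ _ (by positivity)]
    refine (norm_sum_smul_pathResponse_le f ω _ _ _).trans_eq (sum_congr rfl fun i _ => ?_)
    rw [Complex.norm_real, Real.norm_of_nonneg (div_nonneg (hri i) hr.le)]
end
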